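/- For every positive integer n, ∫_0^∞ n (ln x) e^{-x} (1 - e^{-x})^{n-1} dx = -γ + ∑_{j=1}^n (-1)^j C(n, j) ln j. -/

import Mathlib

/-!
Differentiating the binomial expansion of `(1 - y)ⁿ` gives
`n y (1 - y)ⁿ⁻¹ = ∑_{j=1}^n (-1)^(j+1) C(n, j) j yʲ`; with `y = e^{-x}` the integral splits
into the integrals `∫₀^∞ log x · j e^{-jx} dx = -γ - log j`, obtained from `Γ'(1) = -γ` by
the substitution `x ↦ jx`. The `γ` terms then sum to `-γ` because
`∑_{j=1}^n (-1)^j C(n, j) = -1`.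
-/

open Real MeasureTheory Finset

noncomputable def γ : ℝ := Real.eulerMascheroniConstant

namespace Finset

theorem sum_Icc_one_eq_sum_range {M : Type*} [AddCommMonoid M] (f : ℕ → M) (n : ℕ) :
    ∑ j ∈ Icc 1 n, f j = ∑ i ∈ range n, f (i + 1) := by
  rw [range_eq_Ico, sum_Ico_add', ← Ico_add_one_right_eq_Icc]

theorem sum_Icc_one_neg_one_pow_mul_choose {R : Type*} [CommRing R] {n : ℕ} (hn : n ≠ 0) :
    ∑ j ∈ Icc 1 n, (-1 : R) ^ j * n.choose j = -1 := by
  have h : ∑ i ∈ range (n + 1), (-1 : R) ^ i * n.choose i = 0 := by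
    exact_mod_cast congrArg (Int.cast : ℤ → R) (Int.alternating_sum_range_choose_of_ne hn)
  rw [sum_range_succ', pow_zero, Nat.choose_zero_right, Nat.cast_one, mul_one] at h
  rw [sum_Icc_one_eq_sum_range]
  linear_combination h

theorem sum_Icc_one_neg_one_pow_mul_choose_mul_mul_pow {R : Type*} [CommRing R] (n : ℕ)
    (y : R) :
    ∑ j ∈ Icc 1 n, (-1 : R) ^ (j + 1) * n.choose j * (j * y ^ j)
      = n * y * (1 - y) ^ (n - 1) := by
  rcases n with _ | m
  · simp
  have hterm : ∀ i ∈ range (m + 1),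
      (-1 : R) ^ (i + 1 + 1) * (m + 1).choose (i + 1) * ((i + 1 : ℕ) * y ^ (i + 1))
        = (m + 1 : R) * y * ((-y) ^ i * 1 ^ (m - i) * m.choose i) := by
    intro i _
    have hc : ((m + 1).choose (i + 1) : R) * (i + 1) = (m + 1) * (m.choose i : R) := by
      exact_mod_cast congrArg (Nat.cast (R := R)) (Nat.add_one_mul_choose_eq m i).symm
    push_cast
    rw [neg_pow, one_pow]
    linear_combination ((-1 : R) ^ i * y ^ i * y) * hc
  rw [sum_Icc_one_eq_sum_range, sum_congr rfl hterm, ← mul_sum, ← add_pow, neg_add_eq_sub]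
  push_cast
  simp

end Finset

open Filter Asymptotics Topology in
theorem integrableOn_log_mul_exp_neg :
    IntegrableOn (fun t : ℝ => log t * exp (-t)) (Set.Ioi 0) := by
  have hcont : LocallyIntegrableOn (fun t : ℝ => log t * exp (-t)) (Set.Ioi 0) :=
    ((continuousOn_log.mono fun _ ht => ne_of_gt ht).mul
      (continuous_exp.comp continuous_neg).continuousOn).locallyIntegrableOn measurableSet_Ioi
  have hexp_top : (fun t : ℝ => exp (-t)) =O[atTop] (· ^ (-(3 : ℝ))) := by
    simpa only [neg_one_mul] using (isLittleO_exp_neg_mul_rpow_atTop zero_lt_one _).isBigO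
  have hexp_bot : (fun t : ℝ => exp (-t)) =O[𝓝[>] 0] (· ^ (-(0 : ℝ))) := by
    refine IsBigO.of_bound 1 ?_
    filter_upwards [self_mem_nhdsWithin] with t (ht : 0 < t)
    simpa [abs_of_pos (exp_pos _)] using ht.le
  have htop := isBigO_rpow_top_log_smul (by norm_num : (2 : ℝ) < 3) hexp_top
  have hbot := isBigO_rpow_zero_log_smul (by norm_num : (0 : ℝ) < 1 / 2) hexp_bot
  simpa using mellin_convergent_of_isBigO_scalar (s := 1) hcont htop (by norm_num) hbot
    (by norm_num)

-- `Γ'(1) = ∫ log t · e^{-t} dt`, differentiating under the Gamma integral.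
open Topology in
theorem integral_log_mul_exp_neg :
    ∫ t in Set.Ioi (0 : ℝ), log t * exp (-t) = -eulerMascheroniConstant := by
  have hderiv := Complex.hasDerivAt_GammaIntegral (s := 1) (by norm_num)
  simp only [sub_self, Complex.cpow_zero, one_mul] at hderiv
  have hGamma : Complex.GammaIntegral =ᶠ[𝓝 1] Complex.Gamma := by
    filter_upwards [(isOpen_lt continuous_const Complex.continuous_re).mem_nhds
      (by norm_num : (0 : ℝ) < (1 : ℂ).re)] with s hs
    exact (Complex.Gamma_eq_integral hs).symm
  have := (hderiv.congr_of_eventuallyEq hGamma.symm).unique Complex.hasDerivAt_Gamma_one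
  simp_rw [← Complex.ofReal_mul] at this
  rw [integral_complex_ofReal] at this
  exact_mod_cast this

theorem integrableOn_log_mul_exp_neg_mul {c : ℝ} (hc : 0 < c) :
    IntegrableOn (fun t : ℝ => log t * exp (-c * t)) (Set.Ioi 0) := by
  have hscaled : IntegrableOn (fun t : ℝ => log (c * t) * exp (-(c * t))) (Set.Ioi 0) :=
    (integrableOn_Ioi_comp_mul_left_iff (fun u => log u * exp (-u)) 0 hc).mpr
      (by simpa using integrableOn_log_mul_exp_neg)
  refine (hscaled.sub ((exp_neg_integrableOn_Ioi 0 hc).const_mul (log c))).congr_fun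
    (fun t (ht : 0 < t) => ?_) measurableSet_Ioi
  simp only [Pi.sub_apply, log_mul hc.ne' ht.ne', neg_mul]
  ring

theorem integral_log_mul_mul_exp_neg_mul {c : ℝ} (hc : 0 < c) :
    ∫ t in Set.Ioi (0 : ℝ), log t * (c * exp (-c * t)) = -eulerMascheroniConstant - log c := by
  have hsubst := integral_comp_mul_left_Ioi (fun u => log u * exp (-u)) 0 hc
  rw [mul_zero, integral_log_mul_exp_neg, smul_eq_mul] at hsubst
  have hsplit : ∫ t in Set.Ioi (0 : ℝ), log (c * t) * exp (-(c * t))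
      = (∫ t in Set.Ioi (0 : ℝ), log t * exp (-c * t))
        + log c * ∫ t in Set.Ioi (0 : ℝ), exp (-c * t) := by
    rw [← integral_const_mul, ← integral_add (integrableOn_log_mul_exp_neg_mul hc)
      ((exp_neg_integrableOn_Ioi 0 hc).const_mul _)]
    refine setIntegral_congr_fun measurableSet_Ioi fun t (ht : 0 < t) => ?_
    rw [log_mul hc.ne' ht.ne', neg_mul]
    ring
  rw [integral_exp_mul_Ioi (neg_lt_zero.2 hc), mul_zero, exp_zero, hsubst] at hsplit
  simp_rw [mul_left_comm (log _), integral_const_mul]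
  field_simp at hsplit ⊢
  linarith

theorem mul_log_mul_exp_neg_mul_one_sub_exp_neg_pow_eq_sum (n : ℕ) (x : ℝ) :
    n * log x * exp (-x) * (1 - exp (-x)) ^ (n - 1)
      = ∑ j ∈ Icc 1 n, (-1 : ℝ) ^ (j + 1) * n.choose j * (log x * (j * exp (-j * x))) := by
  have hexp (j : ℕ) : exp (-j * x) = exp (-x) ^ j := by rw [← exp_nat_mul, mul_neg, neg_mul]
  simp_rw [hexp, mul_left_comm _ (log x), ← mul_sum,
    sum_Icc_one_neg_one_pow_mul_choose_mul_mul_pow]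
  ring

theorem stmt5 (n : ℕ) (hn : 1 ≤ n) :
    ∫ x in Set.Ioi (0:ℝ), (n : ℝ) * Real.log x * Real.exp (-x) * (1 - Real.exp (-x)) ^ (n - 1)
      = -γ + ∑ j ∈ Finset.Icc 1 n, (-1 : ℝ) ^ j * (n.choose j : ℝ) * Real.log j := by
  have hpos (j : ℕ) (hj : j ∈ Icc 1 n) : (0 : ℝ) < j := Nat.cast_pos.mpr (mem_Icc.mp hj).1
  simp_rw [mul_log_mul_exp_neg_mul_one_sub_exp_neg_pow_eq_sum]
  have hint (j : ℕ) (hj : j ∈ Icc 1 n) :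
      IntegrableOn (fun x => log x * (j * exp (-j * x))) (Set.Ioi 0) :=
    IntegrableOn.congr_fun ((integrableOn_log_mul_exp_neg_mul (hpos j hj)).const_mul (j : ℝ))
      (fun x _ => by ring) measurableSet_Ioi
  rw [integral_finsetSum _ fun j hj => (hint j hj).const_mul _]
  simp_rw [integral_const_mul]
  rw [sum_congr rfl fun j hj => by rw [integral_log_mul_mul_exp_neg_mul (hpos j hj)]]
  have hterm (j : ℕ) : (-1 : ℝ) ^ (j + 1) * n.choose j * (-eulerMascheroniConstant - log j)
      = eulerMascheroniConstant * ((-1) ^ j * n.choose j) + (-1) ^ j * n.choose j * log j := by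
    ring
  rw [γ, sum_congr rfl fun j _ => hterm j, sum_add_distrib, ← mul_sum,
    sum_Icc_one_neg_one_pow_mul_choose (Nat.one_le_iff_ne_zero.mp hn)]
  ring
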